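/- arXiv:1204.5252 — 7 statements merged into one kernel-verified Lean document; each statement's English description precedes it below -/
import Mathlib

section
/- Let u : ℝ × ℝ → ℝ be a smooth (C^∞) function of (x,t) satisfying the Degasperis–Procesi equation u_t - u_{txx} + 3 u_x + 4 u u_x - 3 u_x u_{xx} - u u_{xxx} = 0 (i.e. with κ = 1), and suppose that m(x,t) := u(x,t) - u_{xx}(x,t) + 1 > 0 for all (x,t). Then the function q := m^{1/3} satisfies the conservation law q_t + (q u)_x = 0 at every point. -/
/-- Partial derivative in the first (spatial) variable. -/
noncomputable def pderivX (f : ℝ → ℝ → ℝ) : ℝ → ℝ → ℝ :=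
  fun x t => deriv (fun x' => f x' t) x

/-- Partial derivative in the second (temporal) variable. -/
noncomputable def pderivT (f : ℝ → ℝ → ℝ) : ℝ → ℝ → ℝ :=
  fun x t => deriv (fun t' => f x t') t

lemma smooth_partials (f : ℝ → ℝ → ℝ)
    (hf : ContDiff ℝ (⊤ : ℕ∞) (fun p : ℝ × ℝ => f p.1 p.2)) :
    (∀ x t : ℝ, HasDerivAt (fun x' => f x' t) (pderivX f x t) x) ∧
    (∀ x t : ℝ, HasDerivAt (fun t' => f x t') (pderivT f x t) t) ∧
    ContDiff ℝ (⊤ : ℕ∞) (fun p : ℝ × ℝ => pderivX f p.1 p.2) ∧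
    ContDiff ℝ (⊤ : ℕ∞) (fun p : ℝ × ℝ => pderivT f p.1 p.2) := by
  set F : ℝ × ℝ → ℝ := fun p => f p.1 p.2 with hF
  have hdF : Differentiable ℝ F := hf.differentiable (by simp)
  have hX : ∀ x t : ℝ, HasDerivAt (fun x' => f x' t) (fderiv ℝ F (x, t) (1, 0)) x := by
    intro x t
    have hγ : HasDerivAt (fun x' : ℝ => ((x', t) : ℝ × ℝ)) ((1 : ℝ), (0 : ℝ)) x :=
      (hasDerivAt_id x).prodMk (hasDerivAt_const x t)
    exact (hdF (x, t)).hasFDerivAt.comp_hasDerivAt x hγ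
  have hT : ∀ x t : ℝ, HasDerivAt (fun t' => f x t') (fderiv ℝ F (x, t) (0, 1)) t := by
    intro x t
    have hγ : HasDerivAt (fun t' : ℝ => ((x, t') : ℝ × ℝ)) ((0 : ℝ), (1 : ℝ)) t :=
      (hasDerivAt_const t x).prodMk (hasDerivAt_id t)
    exact (hdF (x, t)).hasFDerivAt.comp_hasDerivAt t hγ
  have hXval : ∀ x t : ℝ, pderivX f x t = fderiv ℝ F (x, t) (1, 0) := by
    intro x t; exact (hX x t).deriv
  have hTval : ∀ x t : ℝ, pderivT f x t = fderiv ℝ F (x, t) (0, 1) := by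
    intro x t; exact (hT x t).deriv
  have hfd : ContDiff ℝ (⊤ : ℕ∞) (fderiv ℝ F) := hf.fderiv_right (by simp)
  refine ⟨fun x t => hXval x t ▸ hX x t, fun x t => hTval x t ▸ hT x t, ?_, ?_⟩
  · have h1 : ContDiff ℝ (⊤ : ℕ∞) (fun p : ℝ × ℝ => fderiv ℝ F p (1, 0)) :=
      hfd.clm_apply contDiff_const
    have heq : (fun p : ℝ × ℝ => pderivX f p.1 p.2) = fun p : ℝ × ℝ => fderiv ℝ F p (1, 0) :=
      funext fun p => hXval p.1 p.2
    rw [heq]; exact h1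
  · have h1 : ContDiff ℝ (⊤ : ℕ∞) (fun p : ℝ × ℝ => fderiv ℝ F p (0, 1)) :=
      hfd.clm_apply contDiff_const
    have heq : (fun p : ℝ × ℝ => pderivT f p.1 p.2) = fun p : ℝ × ℝ => fderiv ℝ F p (0, 1) :=
      funext fun p => hTval p.1 p.2
    rw [heq]; exact h1

/-- If a smooth `u` solves the Degasperis–Procesi equation with `κ = 1` and
`m = u - u_{xx} + 1 > 0` everywhere, then `q = m^(1/3)` satisfies the conservation
law `q_t + (q u)_x = 0`. -/
theorem cube_root_conservation_law (u : ℝ → ℝ → ℝ)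
    (hu : ContDiff ℝ (⊤ : ℕ∞) (fun p : ℝ × ℝ => u p.1 p.2))
    (m q : ℝ → ℝ → ℝ)
    (hm : ∀ x t : ℝ, m x t = u x t - pderivX (pderivX u) x t + 1)
    (hmpos : ∀ x t : ℝ, 0 < m x t)
    (hDP : ∀ x t : ℝ,
      pderivT u x t - pderivT (pderivX (pderivX u)) x t + 3 * pderivX u x t
        + 4 * u x t * pderivX u x t
        - 3 * pderivX u x t * pderivX (pderivX u) x t
        - u x t * pderivX (pderivX (pderivX u)) x t = 0)
    (hq : ∀ x t : ℝ, q x t = (m x t) ^ ((1 : ℝ) / 3)) :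
    ∀ x t : ℝ,
      pderivT q x t + pderivX (fun x' t' => q x' t' * u x' t') x t = 0 := by
  obtain ⟨huX, huT, huxS, _⟩ := smooth_partials u hu
  obtain ⟨huxX, _, huxxS, _⟩ := smooth_partials (pderivX u) huxS
  obtain ⟨huxxX, huxxT, _, _⟩ := smooth_partials (pderivX (pderivX u)) huxxS
  intro x t
  set M := m x t with hM
  set mt := pderivT u x t - pderivT (pderivX (pderivX u)) x t with hmt
  set mx := pderivX u x t - pderivX (pderivX (pderivX u)) x t with hmx
  -- derivative of m in t
  have hMt : HasDerivAt (fun t' => m x t') mt t := by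
    have h1 : HasDerivAt (fun t' => u x t' - pderivX (pderivX u) x t' + 1) mt t :=
      (((huT x t).sub (huxxT x t)).add_const 1)
    have heq : (fun t' => m x t') = fun t' => u x t' - pderivX (pderivX u) x t' + 1 :=
      funext fun t' => hm x t'
    rw [heq]; exact h1
  -- derivative of m in x
  have hMx : HasDerivAt (fun x' => m x' t) mx x := by
    have h1 : HasDerivAt (fun x' => u x' t - pderivX (pderivX u) x' t + 1) mx x :=
      (((huX x t).sub (huxxX x t)).add_const 1)
    have heq : (fun x' => m x' t) = fun x' => u x' t - pderivX (pderivX u) x' t + 1 :=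
      funext fun x' => hm x' t
    rw [heq]; exact h1
  have hMne : M ≠ 0 := (hmpos x t).ne'
  -- derivative of q in t
  have hQt : HasDerivAt (fun t' => q x t') ((1 / 3 : ℝ) * M ^ ((1 : ℝ) / 3 - 1) * mt) t := by
    have h1 := hMt.rpow_const (p := (1 : ℝ) / 3) (Or.inl hMne)
    have heq : (fun t' => q x t') = fun t' => m x t' ^ ((1 : ℝ) / 3) :=
      funext fun t' => hq x t'
    rw [heq]; convert h1 using 1; ring
  -- derivative of q in x
  have hQx : HasDerivAt (fun x' => q x' t) ((1 / 3 : ℝ) * M ^ ((1 : ℝ) / 3 - 1) * mx) x := by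
    have h1 := hMx.rpow_const (p := (1 : ℝ) / 3) (Or.inl hMne)
    have heq : (fun x' => q x' t) = fun x' => m x' t ^ ((1 : ℝ) / 3) :=
      funext fun x' => hq x' t
    rw [heq]; convert h1 using 1; ring
  have hQU : HasDerivAt (fun x' => q x' t * u x' t)
      ((1 / 3 : ℝ) * M ^ ((1 : ℝ) / 3 - 1) * mx * u x t + q x t * pderivX u x t) x :=
    hQx.mul (huX x t)
  have e1 : pderivT q x t = (1 / 3 : ℝ) * M ^ ((1 : ℝ) / 3 - 1) * mt := hQt.deriv
  have e2 : pderivX (fun x' t' => q x' t' * u x' t') x t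
      = (1 / 3 : ℝ) * M ^ ((1 : ℝ) / 3 - 1) * mx * u x t + q x t * pderivX u x t := hQU.deriv
  rw [e1, e2, hq x t, ← hM]
  have e3 : M ^ ((1 : ℝ) / 3) = M ^ ((1 : ℝ) / 3 - 1) * M := by
    rw [← Real.rpow_add_one hMne]
    norm_num
  rw [e3]
  have hdp := hDP x t
  have hmeq : M = u x t - pderivX (pderivX u) x t + 1 := hm x t
  rw [hmt, hmx]
  linear_combination ((1 : ℝ) / 3) * M ^ ((1 : ℝ) / 3 - 1) * hdp
    + M ^ ((1 : ℝ) / 3 - 1) * pderivX u x t * hmeq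
end

section
/- Let u : ℝ × ℝ → ℝ be a smooth (C^∞) function of (x,t) satisfying the Degasperis–Procesi equation u_t - u_{txx} + 3 u_x + 4 u u_x - 3 u_x u_{xx} - u u_{xxx} = 0 (κ = 1), and set m = u - u_{xx} + 1. Then for every λ ∈ ℂ with λ ≠ 0, the 3×3 matrix-valued functions L(x,t) with rows (0, 1, 0), (0, 0, 1), (λm, 1, 0) and Z(x,t) with rows (u_x - 2/(3λ), -u, 1/λ), (u + 1, 1/(3λ), -u), (u_x - λ u m, 1, -u_x + 1/(3λ)) satisfy the zero-curvature equation L_t - Z_x + L Z - Z L = 0 at every point (x,t). -/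
/-- Auxiliary: spatial partial derivative of a function on the product. -/
noncomputable def pxAux (G : ℝ × ℝ → ℝ) : ℝ × ℝ → ℝ := fun p => fderiv ℝ G p (1, 0)

/-- Auxiliary: temporal partial derivative of a function on the product. -/
noncomputable def ptAux (G : ℝ × ℝ → ℝ) : ℝ × ℝ → ℝ := fun p => fderiv ℝ G p (0, 1)

lemma contDiff_pxAux {G : ℝ × ℝ → ℝ} (hG : ContDiff ℝ (⊤ : ℕ∞) G) : ContDiff ℝ (⊤ : ℕ∞) (pxAux G) :=
  (hG.fderiv_right (by simp)).clm_apply contDiff_const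

lemma hasDerivAt_pxAux {G : ℝ × ℝ → ℝ} (hG : ContDiff ℝ (⊤ : ℕ∞) G) (x t : ℝ) :
    HasDerivAt (fun x' => G (x', t)) (pxAux G (x, t)) x := by
  have h1 : HasDerivAt (fun x' : ℝ => ((x', t) : ℝ × ℝ)) (1, 0) x :=
    (hasDerivAt_id x).prodMk (hasDerivAt_const x t)
  have h2 : HasFDerivAt G (fderiv ℝ G (x, t)) (x, t) :=
    (hG.differentiable (by simp)).differentiableAt.hasFDerivAt
  exact h2.comp_hasDerivAt x h1

lemma hasDerivAt_ptAux {G : ℝ × ℝ → ℝ} (hG : ContDiff ℝ (⊤ : ℕ∞) G) (x t : ℝ) :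
    HasDerivAt (fun t' => G (x, t')) (ptAux G (x, t)) t := by
  have h1 : HasDerivAt (fun t' : ℝ => ((x, t') : ℝ × ℝ)) (0, 1) t :=
    (hasDerivAt_const t x).prodMk (hasDerivAt_id t)
  have h2 : HasFDerivAt G (fderiv ℝ G (x, t)) (x, t) :=
    (hG.differentiable (by simp)).differentiableAt.hasFDerivAt
  exact h2.comp_hasDerivAt t h1

/-- If a smooth `u` solves the Degasperis–Procesi equation with `κ = 1` and
`m = u - u_{xx} + 1`, then for every `λ ≠ 0` the Lax pair matrices `L` and `Z`
satisfy the zero-curvature equation `L_t - Z_x + L Z - Z L = 0`. -/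
theorem dp_zero_curvature (u : ℝ → ℝ → ℝ)
    (hu : ContDiff ℝ (⊤ : ℕ∞) (fun p : ℝ × ℝ => u p.1 p.2))
    (m : ℝ → ℝ → ℝ)
    (hm : ∀ x t : ℝ, m x t = u x t - pderivX (pderivX u) x t + 1)
    (hDP : ∀ x t : ℝ,
      pderivT u x t - pderivT (pderivX (pderivX u)) x t + 3 * pderivX u x t
        + 4 * u x t * pderivX u x t
        - 3 * pderivX u x t * pderivX (pderivX u) x t
        - u x t * pderivX (pderivX (pderivX u)) x t = 0)
    (lam : ℂ) (hlam : lam ≠ 0)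
    (L Z : ℝ → ℝ → Matrix (Fin 3) (Fin 3) ℂ)
    (hL : ∀ x t : ℝ, L x t =
      !![0, 1, 0;
         0, 0, 1;
         lam * (m x t : ℂ), 1, 0])
    (hZ : ∀ x t : ℝ, Z x t =
      !![(pderivX u x t : ℂ) - 2 / (3 * lam), -(u x t : ℂ), 1 / lam;
         (u x t : ℂ) + 1, 1 / (3 * lam), -(u x t : ℂ);
         (pderivX u x t : ℂ) - lam * (u x t : ℂ) * (m x t : ℂ), 1,
           -(pderivX u x t : ℂ) + 1 / (3 * lam)]) :
    ∀ x t : ℝ,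
      (Matrix.of fun i j => deriv (fun t' => L x t' i j) t)
        - (Matrix.of fun i j => deriv (fun x' => Z x' t i j) x)
        + L x t * Z x t - Z x t * L x t = 0 := by
  intro x t
  set F : ℝ × ℝ → ℝ := fun p => u p.1 p.2 with hF
  have hFx : ContDiff ℝ (⊤ : ℕ∞) (pxAux F) := contDiff_pxAux hu
  have hFxx : ContDiff ℝ (⊤ : ℕ∞) (pxAux (pxAux F)) := contDiff_pxAux hFx
  -- identification of the `pderiv`s with the `Aux` partials
  have e1 : ∀ x t : ℝ, pderivX u x t = pxAux F (x, t) := fun x t =>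
    (hasDerivAt_pxAux hu x t).deriv
  have e2 : ∀ x t : ℝ, pderivX (pderivX u) x t = pxAux (pxAux F) (x, t) := by
    intro x t
    have : (fun x' => pderivX u x' t) = fun x' => pxAux F (x', t) := funext fun x' => e1 x' t
    rw [pderivX, this]
    exact (hasDerivAt_pxAux hFx x t).deriv
  have e3 : ∀ x t : ℝ, pderivX (pderivX (pderivX u)) x t = pxAux (pxAux (pxAux F)) (x, t) := by
    intro x t
    have : (fun x' => pderivX (pderivX u) x' t) = fun x' => pxAux (pxAux F) (x', t) :=
      funext fun x' => e2 x' t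
    rw [pderivX, this]
    exact (hasDerivAt_pxAux hFxx x t).deriv
  have e4 : ∀ x t : ℝ, pderivT u x t = ptAux F (x, t) := fun x t =>
    (hasDerivAt_ptAux hu x t).deriv
  have e5 : ∀ x t : ℝ, pderivT (pderivX (pderivX u)) x t = ptAux (pxAux (pxAux F)) (x, t) := by
    intro x t
    have : (fun t' => pderivX (pderivX u) x t') = fun t' => pxAux (pxAux F) (x, t') :=
      funext fun t' => e2 x t'
    rw [pderivT, this]
    exact (hasDerivAt_ptAux hFxx x t).deriv
  -- abbreviations for the values at `(x, t)`
  set U : ℝ := u x t with hU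
  set Ux : ℝ := pxAux F (x, t) with hUx
  set Uxx : ℝ := pxAux (pxAux F) (x, t) with hUxx
  set Uxxx : ℝ := pxAux (pxAux (pxAux F)) (x, t) with hUxxx
  set Ut : ℝ := ptAux F (x, t) with hUt
  set Utxx : ℝ := ptAux (pxAux (pxAux F)) (x, t) with hUtxx
  -- derivative facts at `(x, t)`
  have hdU_x : HasDerivAt (fun x' => u x' t) Ux x := hasDerivAt_pxAux hu x t
  have hdUx_x : HasDerivAt (fun x' => pderivX u x' t) Uxx x := by
    have h := hasDerivAt_pxAux hFx x t
    have : (fun x' => pderivX u x' t) = fun x' => pxAux F (x', t) := funext fun x' => e1 x' t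
    rw [this]; exact h
  have hdU_t : HasDerivAt (fun t' => u x t') Ut t := hasDerivAt_ptAux hu x t
  have hdUxx_t : HasDerivAt (fun t' => pderivX (pderivX u) x t') Utxx t := by
    have h := hasDerivAt_ptAux hFxx x t
    have : (fun t' => pderivX (pderivX u) x t') = fun t' => pxAux (pxAux F) (x, t') :=
      funext fun t' => e2 x t'
    rw [this]; exact h
  have hdUxx_x : HasDerivAt (fun x' => pderivX (pderivX u) x' t) Uxxx x := by
    have h := hasDerivAt_pxAux hFxx x t
    have : (fun x' => pderivX (pderivX u) x' t) = fun x' => pxAux (pxAux F) (x', t) :=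
      funext fun x' => e2 x' t
    rw [this]; exact h
  have hdM_x : HasDerivAt (fun x' => m x' t) (Ux - Uxxx) x := by
    have : (fun x' => m x' t) = fun x' => u x' t - pderivX (pderivX u) x' t + 1 :=
      funext fun x' => hm x' t
    rw [this]
    exact (hdU_x.sub hdUxx_x).add_const 1
  have hdM_t : HasDerivAt (fun t' => m x t') (Ut - Utxx) t := by
    have : (fun t' => m x t') = fun t' => u x t' - pderivX (pderivX u) x t' + 1 :=
      funext fun t' => hm x t'
    rw [this]
    exact (hdU_t.sub hdUxx_t).add_const 1
  -- the DP equation at `(x, t)` in the new variables, over ℂ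
  have hDPR : Ut - Utxx + 3 * Ux + 4 * U * Ux - 3 * Ux * Uxx - U * Uxxx = 0 := by
    have h := hDP x t
    rwa [e1, e2, e3, e4, e5] at h
  have hDPC : (Ut : ℂ) - Utxx + 3 * Ux + 4 * U * Ux - 3 * Ux * Uxx - U * Uxxx = 0 := by
    exact_mod_cast congrArg (fun r : ℝ => (r : ℂ)) hDPR
  have hMC : (m x t : ℂ) = (U : ℂ) - Uxx + 1 := by
    rw [hm x t, e2]; push_cast; rw [← hU, ← hUxx]
  -- time derivative of `L`
  have hLt : (Matrix.of fun i j => deriv (fun t' => L x t' i j) t) =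
      !![0, 0, 0; 0, 0, 0; lam * ((Ut : ℂ) - Utxx), 0, 0] := by
    ext i j
    fin_cases i <;> fin_cases j <;>
      simp only [hL, Matrix.of_apply, Matrix.cons_val', Matrix.cons_val_zero, Matrix.cons_val_one,
        Matrix.head_cons, Matrix.empty_val', Matrix.cons_val_fin_one, Matrix.cons_val_two,
        Matrix.tail_cons, Matrix.head_fin_const, Fin.reduceFinMk, Fin.zero_eta, Fin.mk_one,
        Fin.isValue, Nat.succ_eq_add_one, Nat.reduceAdd, deriv_const']
    rw [((hdM_t.ofReal_comp).const_mul lam).deriv]; push_cast; ring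
  -- space derivative of `Z`
  have hZx : (Matrix.of fun i j => deriv (fun x' => Z x' t i j) x) =
      !![(Uxx : ℂ), -(Ux : ℂ), 0;
         (Ux : ℂ), 0, -(Ux : ℂ);
         (Uxx : ℂ) - lam * ((Ux : ℂ) * (m x t : ℂ) + (U : ℂ) * ((Ux : ℂ) - Uxxx)), 0,
           -(Uxx : ℂ)] := by
    ext i j
    fin_cases i <;> fin_cases j <;>
      simp only [hZ, Matrix.of_apply, Matrix.cons_val', Matrix.cons_val_zero, Matrix.cons_val_one,
        Matrix.head_cons, Matrix.empty_val', Matrix.cons_val_fin_one, Matrix.cons_val_two,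
        Matrix.tail_cons, Matrix.head_fin_const, Fin.reduceFinMk, Fin.zero_eta, Fin.mk_one,
        Fin.isValue, Nat.succ_eq_add_one, Nat.reduceAdd, deriv_const']
    · exact ((hdUx_x.ofReal_comp).sub_const (2 / (3 * lam))).deriv
    · exact (hdU_x.ofReal_comp.neg).deriv
    · exact ((hdU_x.ofReal_comp).add_const 1).deriv
    · exact (hdU_x.ofReal_comp.neg).deriv
    · refine ((hdUx_x.ofReal_comp).sub
        (((hdU_x.ofReal_comp).const_mul lam).mul (hdM_x.ofReal_comp))).deriv.trans ?_
      push_cast; ring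
    · exact ((hdUx_x.ofReal_comp.neg).add_const (1 / (3 * lam))).deriv
  rw [hLt, hZx, hL, hZ, e1 x t, ← hUx, ← hU]
  ext i j
  fin_cases i <;> fin_cases j <;>
    simp only [Matrix.mul_apply, Fin.sum_univ_three, Matrix.sub_apply, Matrix.add_apply,
      Matrix.zero_apply, hMC, Matrix.of_apply, Matrix.cons_val', Matrix.cons_val_zero, Matrix.cons_val_one,
        Matrix.head_cons, Matrix.empty_val', Matrix.cons_val_fin_one, Matrix.cons_val_two,
        Matrix.tail_cons, Matrix.head_fin_const, Fin.reduceFinMk, Fin.zero_eta, Fin.mk_one,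
        Fin.isValue, Nat.succ_eq_add_one, Nat.reduceAdd] <;>
    field_simp <;>
    first
      | ring1
      | linear_combination (3 : ℂ) * lam ^ 2 * hDPC
      | linear_combination (3 : ℂ) * lam * hDPC
end

section
/- Let ω = e^{2πi/3}. For every k ∈ ℂ with k ≠ 0, the 3×3 complex matrix L∞(k) with rows (0, 1, 0), (0, 0, 1), (λ(k), 1, 0) satisfies L∞(k) · P(k) = P(k) · 𝓛(k), where 𝓛(k) = diag(l₁(k), l₂(k), l₃(k)). -/
open Complex

/-- The primitive cube root of unity `ω = e^{2πi/3}`. -/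
noncomputable def ω : ℂ := Complex.exp (2 * Real.pi * Complex.I / 3)

/-- `l_j(k) = (1/√3)(ω^j k + 1/(ω^j k))`. -/
noncomputable def lfun (j : ℕ) (k : ℂ) : ℂ :=
  (1 / (Real.sqrt 3 : ℂ)) * (ω ^ j * k + 1 / (ω ^ j * k))

/-- `λ(k) = (1/(3√3))(k³ + 1/k³)`. -/
noncomputable def lamfun (k : ℂ) : ℂ :=
  (1 / (3 * (Real.sqrt 3 : ℂ))) * (k ^ 3 + 1 / k ^ 3)

/-- `z_j(k) = √3 ((ω^j k)² + (ω^j k)⁻²)/(k³ + k⁻³)`. -/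
noncomputable def zfun (j : ℕ) (k : ℂ) : ℂ :=
  (Real.sqrt 3 : ℂ) * ((ω ^ j * k) ^ 2 + ((ω ^ j * k) ^ 2)⁻¹) / (k ^ 3 + (k ^ 3)⁻¹)

/-- The matrix `P(k)` with rows `(1,1,1)`, `(l₁,l₂,l₃)`, `(l₁²,l₂²,l₃²)`. -/
noncomputable def Pmat (k : ℂ) : Matrix (Fin 3) (Fin 3) ℂ :=
  !![1, 1, 1;
     lfun 1 k, lfun 2 k, lfun 3 k;
     (lfun 1 k) ^ 2, (lfun 2 k) ^ 2, (lfun 3 k) ^ 2]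

lemma omega_cube : ω ^ 3 = 1 := by
  rw [ω, ← Complex.exp_nat_mul]
  push_cast
  rw [show (3:ℂ) * (2 * Real.pi * Complex.I / 3) = 2 * Real.pi * Complex.I by ring]
  exact Complex.exp_two_pi_mul_I

lemma omega_ne_zero : ω ≠ 0 := Complex.exp_ne_zero _

lemma sqrt3_ne : ((Real.sqrt 3 : ℝ) : ℂ) ≠ 0 := by
  norm_cast; positivity

lemma sqrt3_sq : ((Real.sqrt 3 : ℝ) : ℂ) ^ 2 = 3 := by
  norm_cast
  rw [Real.sq_sqrt]; norm_num

lemma lcube (j : ℕ) (k : ℂ) (hk : k ≠ 0) :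
    (lfun j k) ^ 3 = lamfun k + lfun j k := by
  set s : ℂ := ((Real.sqrt 3 : ℝ) : ℂ) with hs
  set x : ℂ := ω ^ j * k with hxdef
  have hx : x ≠ 0 := mul_ne_zero (pow_ne_zero _ omega_ne_zero) hk
  have hx3 : x ^ 3 = k ^ 3 := by
    rw [hxdef, mul_pow, ← pow_mul, mul_comm j 3, pow_mul, omega_cube, one_pow, one_mul]
  have e1 : (x + 1 / x) ^ 3 = k ^ 3 + 1 / k ^ 3 + 3 * (x + 1 / x) := by
    rw [← hx3]; field_simp; ring
  have hsne := sqrt3_ne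
  have hs2 := sqrt3_sq
  rw [lfun, lamfun, mul_pow, e1]
  rw [← hs] at hsne hs2 ⊢
  have hω : ω ≠ 0 := omega_ne_zero
  field_simp
  linear_combination (-(k*ω^(j*2) + 3*k^3*ω^j + 3*k^5*ω^(j*3) + k^7*ω^(j*2))) * hs2

/-- `L∞(k) P(k) = P(k) 𝓛(k)` where `𝓛(k) = diag(l₁(k), l₂(k), l₃(k))`. -/
theorem Linfty_diagonalization (k : ℂ) (hk : k ≠ 0) :
    (!![0, 1, 0;
        0, 0, 1;
        lamfun k, 1, 0] : Matrix (Fin 3) (Fin 3) ℂ) * Pmat k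
      = Pmat k * Matrix.diagonal ![lfun 1 k, lfun 2 k, lfun 3 k] := by
  have h1 := lcube 1 k hk
  have h2 := lcube 2 k hk
  have h3 := lcube 3 k hk
  ext i j
  fin_cases i <;> fin_cases j <;>
    simp [Matrix.mul_apply, Fin.sum_univ_succ, Pmat, Matrix.diagonal] <;>
    try ring1
  · linear_combination (-1 : ℂ) * h1
  · linear_combination (-1 : ℂ) * h2
  · linear_combination (-1 : ℂ) * h3
end

section
/- Let ω = e^{2πi/3} and K₁ = e^{πi/6}. As k → K₁ (k ≠ K₁, k ≠ 0, k⁶ ≠ -1), the matrix-valued function 𝒵(k) + (ω/(2√3)) · (k - K₁)⁻¹ · diag(1, -2, 1) converges to the diagonal matrix diag((-13 - 2ω)/12, (1 + 2ω)/6, (11 - 2ω)/12). Equivalently, 𝒵 has the Laurent expansion 𝒵(k) = -(ω/(2√3)) diag(1,-2,1)/(k - K₁) + diag((-13-2ω)/12, (1+2ω)/6, (11-2ω)/12) + O(k - K₁) as k → K₁. -/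
open Complex

open Filter Topology in
/-- Generic scalar Laurent-limit lemma. -/
private lemma keylim (K s a c e p0 p1 p2 p3 p4 L : ℂ)
    (hK0 : K ≠ 0) (hs0 : s ≠ 0) (ha : a ≠ 0)
    (hc : c = e / (2 * s))
    (hMP : ∀ k : ℂ, 2*s*(s*((a^4*k^4+1)*k)) + e*(a^2*(k^5 + K*k^4 + K^2*k^3 + K^3*k^2 + K^4*k + K^5))
        = 2*(a^2*(s*(s*((k - K)*(p0 + p1*k + p2*k^2 + p3*k^3 + p4*k^4))))))
    (hK6 : K ^ 6 = -1)
    (hL : 6*K^5*L = s*(p0 + p1*K + p2*K^2 + p3*K^3 + p4*K^4)) :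
    Tendsto (fun k : ℂ => s * ((a*k) ^ 2 + ((a*k) ^ 2)⁻¹) / (k ^ 3 + (k ^ 3)⁻¹) + c * (k - K)⁻¹)
      (𝓝[{k : ℂ | k ≠ K ∧ k ≠ 0 ∧ k ^ 6 ≠ -1}] K) (𝓝 L) := by
  set P : ℂ → ℂ := fun k => p0 + p1*k + p2*k^2 + p3*k^3 + p4*k^4 with hP
  set Qf : ℂ → ℂ := fun k => k^5 + K*k^4 + K^2*k^3 + K^3*k^2 + K^4*k + K^5 with hQf
  have hQK : Qf K = 6*K^5 := by simp only [hQf]; ring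
  have hQK0 : Qf K ≠ 0 := by
    rw [hQK]; exact mul_ne_zero (by norm_num) (pow_ne_zero 5 hK0)
  have hcont : Tendsto (fun k : ℂ => s * P k / Qf k) (𝓝 K) (𝓝 (s * P K / Qf K)) := by
    apply ContinuousAt.tendsto
    apply ContinuousAt.div _ _ hQK0
    · fun_prop
    · fun_prop
  have hval : s * P K / Qf K = L := by
    rw [hQK, div_eq_iff (mul_ne_zero (by norm_num) (pow_ne_zero 5 hK0))]
    simp only [hP]
    linear_combination -hL
  have h2 : Tendsto (fun k : ℂ => s * P k / Qf k)
      (𝓝[{k : ℂ | k ≠ K ∧ k ≠ 0 ∧ k ^ 6 ≠ -1}] K) (𝓝 L) :=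
    hval ▸ hcont.mono_left nhdsWithin_le_nhds
  refine h2.congr' ?_
  filter_upwards [self_mem_nhdsWithin] with k hk
  obtain ⟨hkK, hk0, hk6⟩ := hk
  have hkK' : k - K ≠ 0 := sub_ne_zero.mpr hkK
  have h61 : k ^ 6 + 1 ≠ 0 := fun h => hk6 (by linear_combination h)
  have hQk : (k - K) * Qf k = k ^ 6 + 1 := by simp only [hQf]; linear_combination -hK6
  have hQ0 : Qf k ≠ 0 := by
    intro h; apply h61; rw [← hQk, h, mul_zero]
  have hden : k ^ 3 + (k ^ 3)⁻¹ ≠ 0 := by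
    have h : (k ^ 3 + (k ^ 3)⁻¹) * k ^ 3 = k ^ 6 + 1 := by
      field_simp
    intro h0; apply h61; rw [← h, h0, zero_mul]
  have hak : (a * k) ^ 2 ≠ 0 := pow_ne_zero 2 (mul_ne_zero ha hk0)
  have hD : 2 * s * (a ^ 2 * (k ^ 6 + 1)) ≠ 0 :=
    mul_ne_zero (mul_ne_zero two_ne_zero hs0) (mul_ne_zero (pow_ne_zero 2 ha) h61)
  have eA : s * ((a*k) ^ 2 + ((a*k) ^ 2)⁻¹) / (k ^ 3 + (k ^ 3)⁻¹)
      = (2*s*(s*((a^4*k^4+1)*k))) / (2 * s * (a ^ 2 * (k ^ 6 + 1))) := by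
    rw [div_eq_div_iff hden hD]
    field_simp
  have eC : c * (k - K)⁻¹ = (e*(a^2 * Qf k)) / (2 * s * (a ^ 2 * (k ^ 6 + 1))) := by
    rw [hc, ← hQk, eq_div_iff (by rw [hQk]; exact hD)]
    field_simp
  symm
  rw [eA, eC, ← add_div, hMP k, div_eq_div_iff hD hQ0]
  linear_combination (2 * a ^ 2 * s * s * P k) * hQk

open Filter Topology in
/-- `𝒵(k) = -(ω/(2√3)) diag(1,-2,1)/(k - K₁)
      + diag((-13-2ω)/12, (1+2ω)/6, (11-2ω)/12) + O(k - K₁)` as `k → K₁ = e^{πi/6}`. -/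
theorem Zcal_laurent_at_K1 :
    Tendsto
      (fun k : ℂ =>
        Matrix.diagonal ![zfun 1 k, zfun 2 k, zfun 3 k]
          + (ω / (2 * (Real.sqrt 3 : ℂ)) * (k - Complex.exp (Real.pi * Complex.I / 6))⁻¹) •
              Matrix.diagonal ![1, -2, 1])
      (𝓝[{k : ℂ | k ≠ Complex.exp (Real.pi * Complex.I / 6) ∧ k ≠ 0 ∧ k ^ 6 ≠ -1}]
        (Complex.exp (Real.pi * Complex.I / 6)))
      (𝓝 (Matrix.diagonal ![(-13 - 2 * ω) / 12, (1 + 2 * ω) / 6, (11 - 2 * ω) / 12])) := by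
  set K : ℂ := Complex.exp (Real.pi * Complex.I / 6) with hKdef
  set s : ℂ := (Real.sqrt 3 : ℂ) with hsdef
  have hK0 : K ≠ 0 := Complex.exp_ne_zero _
  have hsq : s ^ 2 = 3 := by
    rw [hsdef, ← Complex.ofReal_pow]
    norm_cast
    exact Real.sq_sqrt (by norm_num)
  have hs0 : s ≠ 0 := by
    intro h
    rw [h] at hsq
    norm_num at hsq
  have hKval : K = s / 2 + Complex.I / 2 := by
    rw [hKdef, show (↑Real.pi * Complex.I / 6 : ℂ) = (↑(Real.pi / 6 : ℝ)) * Complex.I by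
      push_cast; ring, Complex.exp_mul_I, ← Complex.ofReal_cos, ← Complex.ofReal_sin,
      Real.cos_pi_div_six, Real.sin_pi_div_six, hsdef]
    push_cast
    ring
  have hs : s = 2 * K - K ^ 3 := by
    rw [hKval]
    linear_combination ((3/8 : ℂ)*Complex.I + (1/8 : ℂ)*s) * hsq
      + ((1/8 : ℂ)*Complex.I + (3/8 : ℂ)*s) * Complex.I_sq
  have hK4 : K ^ 4 = K ^ 2 - 1 := by
    rw [hKval]
    linear_combination ((-1/16 : ℂ) + (3/8 : ℂ)*Complex.I^2 + (1/4 : ℂ)*s*Complex.I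
        + (1/16 : ℂ)*s^2) * hsq
      + ((13/16 : ℂ) + (1/16 : ℂ)*Complex.I^2 + (1/4 : ℂ)*s*Complex.I) * Complex.I_sq
  have hK6 : K ^ 6 = -1 := by linear_combination (K ^ 2 + 1) * hK4
  have hω : ω = K ^ 4 := by
    rw [hKdef, ω, ← Complex.exp_nat_mul]
    congr 1
    push_cast
    ring
  have hω0 : ω ≠ 0 := by rw [hω]; exact pow_ne_zero 4 hK0
  -- the three scalar limits
  have H1 : Tendsto (fun k : ℂ => s * ((ω^1*k) ^ 2 + ((ω^1*k) ^ 2)⁻¹) / (k ^ 3 + (k ^ 3)⁻¹)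
        + (ω * 1 / (2 * s)) * (k - K)⁻¹)
      (𝓝[{k : ℂ | k ≠ K ∧ k ≠ 0 ∧ k ^ 6 ≠ -1}] K) (𝓝 ((-13 - 2 * ω) / 12)) := by
    refine keylim K s (ω^1) _ (ω * 1)
      ((1/6:ℂ)*K^2) ((1/3:ℂ)*K + (-1:ℂ)*K^3) ((1/2:ℂ) + (-1:ℂ)*K^2)
      ((-1/3:ℂ)*K + (-2/3:ℂ)*K^3) ((-1/6:ℂ) + (-5/6:ℂ)*K^2) _
      hK0 hs0 (pow_ne_zero 1 hω0) rfl ?_ hK6 ?_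
    · intro k
      rw [hω, hs]
      linear_combination ((4/3:ℂ)*K^13 + (8:ℂ)*k*K^2 + (-6:ℂ)*k*K^6 + (-6:ℂ)*k*K^8
        + (22/3:ℂ)*k*K^12 + (-2:ℂ)*k*K^14 + (4/3:ℂ)*k^2*K^11 + (-4:ℂ)*k^3*K^10
        + (16/3:ℂ)*k^3*K^12 + (-4/3:ℂ)*k^3*K^14 + (4/3:ℂ)*k^4*K^11 + (-1/3:ℂ)*k^4*K^13
        + (4/3:ℂ)*k^5*K^10 + (23/3:ℂ)*k^5*K^12 + (-6:ℂ)*k^5*K^16 + (2:ℂ)*k^5*K^18) * hK4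
    · rw [hω, hs]
      linear_combination ((-2:ℂ)*K^3 + (-5/2:ℂ)*K^5) * hK4
  have H2 : Tendsto (fun k : ℂ => s * ((ω^2*k) ^ 2 + ((ω^2*k) ^ 2)⁻¹) / (k ^ 3 + (k ^ 3)⁻¹)
        + (ω * (-2) / (2 * s)) * (k - K)⁻¹)
      (𝓝[{k : ℂ | k ≠ K ∧ k ≠ 0 ∧ k ^ 6 ≠ -1}] K) (𝓝 ((1 + 2 * ω) / 6)) := by
    refine keylim K s (ω^2) _ (ω * (-2))
      ((-1/3:ℂ)*K^2) ((1/3:ℂ)*K) 0 ((-1/3:ℂ)*K + (1/3:ℂ)*K^3) ((-2/3:ℂ) + (2/3:ℂ)*K^2) _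
      hK0 hs0 (pow_ne_zero 2 hω0) rfl ?_ hK6 ?_
    · intro k
      rw [hω, hs]
      linear_combination ((-8/3:ℂ)*K^21 + (8:ℂ)*k*K^2 + (-6:ℂ)*k*K^6 + (-6:ℂ)*k*K^8
        + (6:ℂ)*k*K^12 + (6:ℂ)*k*K^14 + (-6:ℂ)*k*K^18 + (-2/3:ℂ)*k*K^20 + (-8/3:ℂ)*k^2*K^19
        + (-8/3:ℂ)*k^3*K^20 + (2/3:ℂ)*k^3*K^22 + (-8/3:ℂ)*k^4*K^19 + (2/3:ℂ)*k^4*K^21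
        + (16/3:ℂ)*k^5*K^18 + (-22/3:ℂ)*k^5*K^20 + (-6:ℂ)*k^5*K^22 + (6:ℂ)*k^5*K^26
        + (6:ℂ)*k^5*K^28 + (-6:ℂ)*k^5*K^32 + (2:ℂ)*k^5*K^34) * hK4
    · rw [hω, hs]
      linear_combination ((3:ℂ)*K^5) * hK4
  have H3 : Tendsto (fun k : ℂ => s * ((ω^3*k) ^ 2 + ((ω^3*k) ^ 2)⁻¹) / (k ^ 3 + (k ^ 3)⁻¹)
        + (ω * 1 / (2 * s)) * (k - K)⁻¹)
      (𝓝[{k : ℂ | k ≠ K ∧ k ≠ 0 ∧ k ^ 6 ≠ -1}] K) (𝓝 ((11 - 2 * ω) / 12)) := by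
    refine keylim K s (ω^3) _ (ω * 1)
      ((1/6:ℂ)*K^2) ((-2/3:ℂ)*K + K^3) ((-1/2:ℂ) + K^2) ((2/3:ℂ)*K + (1/3:ℂ)*K^3)
      ((5/6:ℂ) + (1/6:ℂ)*K^2) _
      hK0 hs0 (pow_ne_zero 3 hω0) rfl ?_ hK6 ?_
    · intro k
      rw [hω, hs]
      linear_combination ((4/3:ℂ)*K^29 + (8:ℂ)*k*K^2 + (-6:ℂ)*k*K^6 + (-6:ℂ)*k*K^8
        + (6:ℂ)*k*K^12 + (6:ℂ)*k*K^14 + (-6:ℂ)*k*K^18 + (-6:ℂ)*k*K^20 + (6:ℂ)*k*K^24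
        + (6:ℂ)*k*K^26 + (-20/3:ℂ)*k*K^28 + (2:ℂ)*k*K^30 + (4/3:ℂ)*k^2*K^27 + (4:ℂ)*k^3*K^26
        + (-8/3:ℂ)*k^3*K^28 + (2/3:ℂ)*k^3*K^30 + (4/3:ℂ)*k^4*K^27 + (-1/3:ℂ)*k^4*K^29
        + (-20/3:ℂ)*k^5*K^26 + (-1/3:ℂ)*k^5*K^28 + (6:ℂ)*k^5*K^30 + (6:ℂ)*k^5*K^32
        + (-6:ℂ)*k^5*K^36 + (-6:ℂ)*k^5*K^38 + (6:ℂ)*k^5*K^42 + (6:ℂ)*k^5*K^44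
        + (-6:ℂ)*k^5*K^48 + (2:ℂ)*k^5*K^50) * hK4
    · rw [hω, hs]
      linear_combination ((2:ℂ)*K^3 + (-1/2:ℂ)*K^5) * hK4
  -- assemble the matrix limit
  have hfun : ∀ k : ℂ,
      Matrix.diagonal ![zfun 1 k, zfun 2 k, zfun 3 k]
          + (ω / (2 * s) * (k - K)⁻¹) • Matrix.diagonal ![1, -2, 1]
        = Matrix.diagonal (fun i => ![zfun 1 k, zfun 2 k, zfun 3 k] i
            + (ω / (2 * s) * (k - K)⁻¹) • (![1, -2, 1] : Fin 3 → ℂ) i) := by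
    intro k
    rw [← Matrix.diagonal_smul, ← Matrix.diagonal_add]
    rfl
  have hg : Tendsto (fun k : ℂ => fun i => ![zfun 1 k, zfun 2 k, zfun 3 k] i
        + (ω / (2 * s) * (k - K)⁻¹) • (![1, -2, 1] : Fin 3 → ℂ) i)
      (𝓝[{k : ℂ | k ≠ K ∧ k ≠ 0 ∧ k ^ 6 ≠ -1}] K)
      (𝓝 (![(-13 - 2 * ω) / 12, (1 + 2 * ω) / 6, (11 - 2 * ω) / 12])) := by
    rw [tendsto_pi_nhds]
    intro i
    fin_cases i
    · refine H1.congr fun k => ?_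
      simp [zfun, Matrix.cons_val_zero, Matrix.cons_val_one, Matrix.head_cons]
      rfl
    · refine H2.congr fun k => ?_
      simp [zfun, Matrix.cons_val_zero, Matrix.cons_val_one, Matrix.head_cons]
      ring
    · refine H3.congr fun k => ?_
      simp [zfun, Matrix.cons_val_zero, Matrix.cons_val_one, Matrix.head_cons]
      rfl
  have hdiag := ((continuous_id.matrix_diagonal).tendsto
    (![(-13 - 2 * ω) / 12, (1 + 2 * ω) / 6, (11 - 2 * ω) / 12] : Fin 3 → ℂ)).comp hg
  refine hdiag.congr fun k => ?_
  exact (hfun k).symm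
end

section
/- Let s and S be 3×3 complex matrices with det s = det S = 1, m₃₃(s) ≠ 0, and W₁ ≠ 0, where W₁ = s₁₁ m₁₁(S) - s₂₁ m₂₁(S) + s₃₁ m₃₁(S). Suppose S₇, T₇, R₇ are 3×3 complex matrices such that (S₇)₁₃ = (S₇)₂₃ = 0; T₇ is unit upper triangular (diagonal entries 1, vanishing strictly lower-triangular entries); (R₇)₁₂ = 0; T₇ and R₇ are invertible; s = S₇ · T₇⁻¹; and S = S₇ · R₇⁻¹. Then S₇ is uniquely determined and equals the matrix with columns: first column (s₁₁, s₂₁, s₃₁); second column ((m₃₃(s) m₂₁(S) - m₂₃(s) m₃₁(S))/W₁, (m₃₃(s) m₁₁(S) - m₁₃(s) m₃₁(S))/W₁, (m₂₃(s) m₁₁(S) - m₁₃(s) m₂₁(S))/W₁); third column (0, 0, 1/m₃₃(s)). -/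
/-- The `(i,j)`th minor of a 3×3 matrix: the determinant of the 2×2 matrix obtained
by deleting the `i`th row and the `j`th column (no sign factor). -/
noncomputable def minor3 (A : Matrix (Fin 3) (Fin 3) ℂ) (i j : Fin 3) : ℂ :=
  (A.submatrix i.succAbove j.succAbove).det

lemma minor3_22 (A : Matrix (Fin 3) (Fin 3) ℂ) :
    minor3 A 2 2 = A 0 0 * A 1 1 - A 0 1 * A 1 0 := by
  simp only [minor3, Matrix.det_fin_two, Matrix.submatrix_apply]
  norm_num [Fin.succAbove, Fin.lt_def]

lemma minor3_12 (A : Matrix (Fin 3) (Fin 3) ℂ) :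
    minor3 A 1 2 = A 0 0 * A 2 1 - A 0 1 * A 2 0 := by
  simp only [minor3, Matrix.det_fin_two, Matrix.submatrix_apply]
  norm_num [Fin.succAbove, Fin.lt_def]

lemma minor3_02 (A : Matrix (Fin 3) (Fin 3) ℂ) :
    minor3 A 0 2 = A 1 0 * A 2 1 - A 1 1 * A 2 0 := by
  simp only [minor3, Matrix.det_fin_two, Matrix.submatrix_apply]
  norm_num [Fin.succAbove, Fin.lt_def]

lemma minor3_00 (A : Matrix (Fin 3) (Fin 3) ℂ) :
    minor3 A 0 0 = A 1 1 * A 2 2 - A 1 2 * A 2 1 := by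
  simp only [minor3, Matrix.det_fin_two, Matrix.submatrix_apply]
  norm_num [Fin.succAbove, Fin.lt_def]

lemma minor3_10 (A : Matrix (Fin 3) (Fin 3) ℂ) :
    minor3 A 1 0 = A 0 1 * A 2 2 - A 0 2 * A 2 1 := by
  simp only [minor3, Matrix.det_fin_two, Matrix.submatrix_apply]
  norm_num [Fin.succAbove, Fin.lt_def]

lemma minor3_20 (A : Matrix (Fin 3) (Fin 3) ℂ) :
    minor3 A 2 0 = A 0 1 * A 1 2 - A 0 2 * A 1 1 := by
  simp only [minor3, Matrix.det_fin_two, Matrix.submatrix_apply]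
  norm_num [Fin.succAbove, Fin.lt_def]

/-- Uniqueness of the factorization `s = S₇ T₇⁻¹`, `S = S₇ R₇⁻¹`: the factor `S₇`
is given explicitly in terms of entries and minors of `s` and `S`. -/
theorem S7_factorization_explicit (s S S₇ T₇ R₇ : Matrix (Fin 3) (Fin 3) ℂ)
    (hdets : s.det = 1) (hdetS : S.det = 1)
    (hm33 : minor3 s 2 2 ≠ 0)
    (hW1 : s 0 0 * minor3 S 0 0 - s 1 0 * minor3 S 1 0 + s 2 0 * minor3 S 2 0 ≠ 0)
    (hS₇ : S₇ 0 2 = 0 ∧ S₇ 1 2 = 0)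
    (hT₇diag : T₇ 0 0 = 1 ∧ T₇ 1 1 = 1 ∧ T₇ 2 2 = 1)
    (hT₇lower : T₇ 1 0 = 0 ∧ T₇ 2 0 = 0 ∧ T₇ 2 1 = 0)
    (hR₇ : R₇ 0 1 = 0)
    (hT₇unit : IsUnit T₇) (hR₇unit : IsUnit R₇)
    (hfact1 : s = S₇ * T₇⁻¹) (hfact2 : S = S₇ * R₇⁻¹) :
    S₇ = !![s 0 0,
            (minor3 s 2 2 * minor3 S 1 0 - minor3 s 1 2 * minor3 S 2 0) /
              (s 0 0 * minor3 S 0 0 - s 1 0 * minor3 S 1 0 + s 2 0 * minor3 S 2 0), 0;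
            s 1 0,
            (minor3 s 2 2 * minor3 S 0 0 - minor3 s 0 2 * minor3 S 2 0) /
              (s 0 0 * minor3 S 0 0 - s 1 0 * minor3 S 1 0 + s 2 0 * minor3 S 2 0), 0;
            s 2 0,
            (minor3 s 1 2 * minor3 S 0 0 - minor3 s 0 2 * minor3 S 1 0) /
              (s 0 0 * minor3 S 0 0 - s 1 0 * minor3 S 1 0 + s 2 0 * minor3 S 2 0),
            1 / minor3 s 2 2] := by
  obtain ⟨hS702, hS712⟩ := hS₇
  obtain ⟨hT00, hT11, hT22⟩ := hT₇diag
  obtain ⟨hT10, hT20, hT21⟩ := hT₇lower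
  have h1 : s * T₇ = S₇ := by
    rw [hfact1]
    exact Matrix.nonsing_inv_mul_cancel_right _ _ ((Matrix.isUnit_iff_isUnit_det _).mp hT₇unit)
  have h2 : S * R₇ = S₇ := by
    rw [hfact2]
    exact Matrix.nonsing_inv_mul_cancel_right _ _ ((Matrix.isUnit_iff_isUnit_det _).mp hR₇unit)
  -- entrywise consequences
  have e1 : ∀ i j, s i 0 * T₇ 0 j + s i 1 * T₇ 1 j + s i 2 * T₇ 2 j = S₇ i j := by
    intro i j
    have := congrFun (congrFun h1 i) j
    simpa [Matrix.mul_apply, Fin.sum_univ_three] using this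
  have e2 : ∀ i j, S i 0 * R₇ 0 j + S i 1 * R₇ 1 j + S i 2 * R₇ 2 j = S₇ i j := by
    intro i j
    have := congrFun (congrFun h2 i) j
    simpa [Matrix.mul_apply, Fin.sum_univ_three] using this
  set a := T₇ 0 1 with ha
  set b := T₇ 0 2 with hb
  set c := T₇ 1 2 with hc
  set p := R₇ 1 1 with hp
  set q := R₇ 2 1 with hq
  -- column 0
  have col0 : ∀ i, S₇ i 0 = s i 0 := by
    intro i
    have h := e1 i 0
    rw [hT00, hT10, hT20] at h
    linear_combination -h
  -- column 1 equations
  have H : ∀ i, S₇ i 1 = s i 0 * a + s i 1 := by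
    intro i
    have h := e1 i 1
    rw [hT11, hT21] at h
    linear_combination -h
  have G : ∀ i, S₇ i 1 = S i 1 * p + S i 2 * q := by
    intro i
    have h := e2 i 1
    rw [hR₇] at h
    linear_combination -h
  have K : ∀ i, s i 0 * a + s i 1 = S i 1 * p + S i 2 * q := by
    intro i
    linear_combination G i - H i
  have haW : a * (s 0 0 * (S 1 1 * S 2 2 - S 1 2 * S 2 1)
        - s 1 0 * (S 0 1 * S 2 2 - S 0 2 * S 2 1)
        + s 2 0 * (S 0 1 * S 1 2 - S 0 2 * S 1 1))
      = -(s 0 1 * (S 1 1 * S 2 2 - S 1 2 * S 2 1)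
        - s 1 1 * (S 0 1 * S 2 2 - S 0 2 * S 2 1)
        + s 2 1 * (S 0 1 * S 1 2 - S 0 2 * S 1 1)) := by
    linear_combination (S 1 1 * S 2 2 - S 1 2 * S 2 1) * K 0
      - (S 0 1 * S 2 2 - S 0 2 * S 2 1) * K 1
      + (S 0 1 * S 1 2 - S 0 2 * S 1 1) * K 2
  -- column 2 equations
  have E : ∀ i, s i 0 * b + s i 1 * c + s i 2 = S₇ i 2 := fun i => by
    have h := e1 i 2
    rw [hT22] at h
    linear_combination h
  have E0 : s 0 0 * b + s 0 1 * c + s 0 2 = 0 := by rw [E 0, hS702]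
  have E1 : s 1 0 * b + s 1 1 * c + s 1 2 = 0 := by rw [E 1, hS712]
  have hdets' : s 0 0 * s 1 1 * s 2 2 - s 0 0 * s 1 2 * s 2 1 - s 0 1 * s 1 0 * s 2 2
      + s 0 1 * s 1 2 * s 2 0 + s 0 2 * s 1 0 * s 2 1 - s 0 2 * s 1 1 * s 2 0 = 1 := by
    rw [Matrix.det_fin_three] at hdets
    linear_combination hdets
  have hm33' : s 0 0 * s 1 1 - s 0 1 * s 1 0 ≠ 0 := by rwa [minor3_22] at hm33
  have hW1' : s 0 0 * (S 1 1 * S 2 2 - S 1 2 * S 2 1)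
      - s 1 0 * (S 0 1 * S 2 2 - S 0 2 * S 2 1)
      + s 2 0 * (S 0 1 * S 1 2 - S 0 2 * S 1 1) ≠ 0 := by
    rwa [minor3_00, minor3_10, minor3_20] at hW1
  have h01 : S₇ 0 1 = (minor3 s 2 2 * minor3 S 1 0 - minor3 s 1 2 * minor3 S 2 0) /
      (s 0 0 * minor3 S 0 0 - s 1 0 * minor3 S 1 0 + s 2 0 * minor3 S 2 0) := by
    rw [minor3_22, minor3_12, minor3_00, minor3_10, minor3_20, H 0]
    rw [eq_div_iff hW1']
    linear_combination (s 0 0) * haW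
  have h11 : S₇ 1 1 = (minor3 s 2 2 * minor3 S 0 0 - minor3 s 0 2 * minor3 S 2 0) /
      (s 0 0 * minor3 S 0 0 - s 1 0 * minor3 S 1 0 + s 2 0 * minor3 S 2 0) := by
    rw [minor3_22, minor3_02, minor3_00, minor3_10, minor3_20, H 1]
    rw [eq_div_iff hW1']
    linear_combination (s 1 0) * haW
  have h21 : S₇ 2 1 = (minor3 s 1 2 * minor3 S 0 0 - minor3 s 0 2 * minor3 S 1 0) /
      (s 0 0 * minor3 S 0 0 - s 1 0 * minor3 S 1 0 + s 2 0 * minor3 S 2 0) := by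
    rw [minor3_12, minor3_02, minor3_00, minor3_10, minor3_20, H 2]
    rw [eq_div_iff hW1']
    linear_combination (s 2 0) * haW
  have h22 : S₇ 2 2 = 1 / minor3 s 2 2 := by
    rw [minor3_22, ← E 2]
    field_simp
    linear_combination (s 1 1 * s 2 0 - s 1 0 * s 2 1) * E0
      + (s 0 0 * s 2 1 - s 0 1 * s 2 0) * E1 + hdets'
  rw [Matrix.eta_fin_three S₇, col0 0, col0 1, col0 2, h01, h11, h21, h22, hS702, hS712]
end

section
/- Let s and S be 3×3 complex matrices with det s = det S = 1, s₁₁ ≠ 0, m₃₃(s) ≠ 0, and W₂ ≠ 0, where W₂ = m₃₃(s) m₂₂(S) - m₂₃(s) m₃₂(S). Suppose S₈, T₈, R₈ are 3×3 complex matrices such that (S₈)₁₂ = (S₈)₁₃ = 0; T₈ is unit upper triangular (diagonal entries 1, vanishing strictly lower-triangular entries); (R₈)₂₃ = 0; T₈ and R₈ are invertible; s = S₈ · T₈⁻¹; and S = S₈ · R₈⁻¹. Then S₈ is uniquely determined and equals the matrix with columns: first column (s₁₁, s₂₁, s₃₁); second column (0, m₃₃(s)/s₁₁, m₂₃(s)/s₁₁);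 third column (0, m₃₂(S)/W₂, m₂₂(S)/W₂). -/
lemma minor3_11 (A : Matrix (Fin 3) (Fin 3) ℂ) :
    minor3 A 1 1 = A 0 0 * A 2 2 - A 0 2 * A 2 0 := by
  rw [minor3, Matrix.det_fin_two]; simp [Fin.succAbove]

lemma minor3_21 (A : Matrix (Fin 3) (Fin 3) ℂ) :
    minor3 A 2 1 = A 0 0 * A 1 2 - A 0 2 * A 1 0 := by
  rw [minor3, Matrix.det_fin_two]; simp [Fin.succAbove]

/-- Uniqueness of the factorization `s = S₈ T₈⁻¹`, `S = S₈ R₈⁻¹`: the factor `S₈`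
is given explicitly in terms of entries and minors of `s` and `S`. -/
theorem S8_factorization_explicit (s S S₈ T₈ R₈ : Matrix (Fin 3) (Fin 3) ℂ)
    (hdets : s.det = 1) (hdetS : S.det = 1)
    (hs11 : s 0 0 ≠ 0) (hm33 : minor3 s 2 2 ≠ 0)
    (hW2 : minor3 s 2 2 * minor3 S 1 1 - minor3 s 1 2 * minor3 S 2 1 ≠ 0)
    (hS₈ : S₈ 0 1 = 0 ∧ S₈ 0 2 = 0)
    (hT₈diag : T₈ 0 0 = 1 ∧ T₈ 1 1 = 1 ∧ T₈ 2 2 = 1)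
    (hT₈lower : T₈ 1 0 = 0 ∧ T₈ 2 0 = 0 ∧ T₈ 2 1 = 0)
    (hR₈ : R₈ 1 2 = 0)
    (hT₈unit : IsUnit T₈) (hR₈unit : IsUnit R₈)
    (hfact1 : s = S₈ * T₈⁻¹) (hfact2 : S = S₈ * R₈⁻¹) :
    S₈ = !![s 0 0, 0, 0;
            s 1 0, minor3 s 2 2 / s 0 0,
              minor3 S 2 1 / (minor3 s 2 2 * minor3 S 1 1 - minor3 s 1 2 * minor3 S 2 1);
            s 2 0, minor3 s 1 2 / s 0 0,
              minor3 S 1 1 / (minor3 s 2 2 * minor3 S 1 1 - minor3 s 1 2 * minor3 S 2 1)] := by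
  obtain ⟨h01, h02⟩ := hS₈
  obtain ⟨ht00, ht11, ht22⟩ := hT₈diag
  obtain ⟨ht10, ht20, ht21⟩ := hT₈lower
  have hS8T : S₈ = s * T₈ := by
    rw [hfact1, Matrix.mul_assoc,
      Matrix.nonsing_inv_mul _ ((Matrix.isUnit_iff_isUnit_det T₈).mp hT₈unit), Matrix.mul_one]
  have hS8R : S₈ = S * R₈ := by
    rw [hfact2, Matrix.mul_assoc,
      Matrix.nonsing_inv_mul _ ((Matrix.isUnit_iff_isUnit_det R₈).mp hR₈unit), Matrix.mul_one]
  have hdetT : T₈.det = 1 := by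
    rw [Matrix.det_fin_three, ht00, ht11, ht22, ht10, ht20, ht21]; ring
  have hdetS8 : S₈.det = 1 := by
    rw [hS8T, Matrix.det_mul, hdets, hdetT, one_mul]
  have hS00 : S₈ 0 0 = s 0 0 := by
    rw [hS8T]; simp [Matrix.mul_apply, Fin.sum_univ_three, ht00, ht10, ht20]
  have hS10 : S₈ 1 0 = s 1 0 := by
    rw [hS8T]; simp [Matrix.mul_apply, Fin.sum_univ_three, ht00, ht10, ht20]
  have hS20 : S₈ 2 0 = s 2 0 := by
    rw [hS8T]; simp [Matrix.mul_apply, Fin.sum_univ_three, ht00, ht10, ht20]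
  have hS01 : S₈ 0 1 = s 0 0 * T₈ 0 1 + s 0 1 := by
    rw [hS8T]; simp [Matrix.mul_apply, Fin.sum_univ_three, ht11, ht21]
  have hS11 : S₈ 1 1 = s 1 0 * T₈ 0 1 + s 1 1 := by
    rw [hS8T]; simp [Matrix.mul_apply, Fin.sum_univ_three, ht11, ht21]
  have hS21 : S₈ 2 1 = s 2 0 * T₈ 0 1 + s 2 1 := by
    rw [hS8T]; simp [Matrix.mul_apply, Fin.sum_univ_three, ht11, ht21]
  have hS02 : S₈ 0 2 = S 0 0 * R₈ 0 2 + S 0 2 * R₈ 2 2 := by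
    rw [hS8R]; simp [Matrix.mul_apply, Fin.sum_univ_three, hR₈]
  have hS12 : S₈ 1 2 = S 1 0 * R₈ 0 2 + S 1 2 * R₈ 2 2 := by
    rw [hS8R]; simp [Matrix.mul_apply, Fin.sum_univ_three, hR₈]
  have hS22 : S₈ 2 2 = S 2 0 * R₈ 0 2 + S 2 2 * R₈ 2 2 := by
    rw [hS8R]; simp [Matrix.mul_apply, Fin.sum_univ_three, hR₈]
  have ha : s 0 0 * T₈ 0 1 + s 0 1 = 0 := hS01.symm.trans h01
  have h1 : S 0 0 * R₈ 0 2 + S 0 2 * R₈ 2 2 = 0 := hS02.symm.trans h02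
  have hd := hdetS8
  rw [Matrix.det_fin_three, hS00, h01, h02, hS10, hS11, hS12, hS20, hS21, hS22] at hd
  rw [minor3_22, minor3_12, minor3_11, minor3_21] at hW2 ⊢
  have e11 : s 1 0 * T₈ 0 1 + s 1 1 = (s 0 0 * s 1 1 - s 0 1 * s 1 0) / s 0 0 := by
    rw [eq_div_iff hs11]; linear_combination s 1 0 * ha
  have e21 : s 2 0 * T₈ 0 1 + s 2 1 = (s 0 0 * s 2 1 - s 0 1 * s 2 0) / s 0 0 := by
    rw [eq_div_iff hs11]; linear_combination s 2 0 * ha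
  have e12 : S 1 0 * R₈ 0 2 + S 1 2 * R₈ 2 2 =
      (S 0 0 * S 1 2 - S 0 2 * S 1 0) /
        ((s 0 0 * s 1 1 - s 0 1 * s 1 0) * (S 0 0 * S 2 2 - S 0 2 * S 2 0) -
          (s 0 0 * s 2 1 - s 0 1 * s 2 0) * (S 0 0 * S 1 2 - S 0 2 * S 1 0)) := by
    rw [eq_div_iff hW2]
    linear_combination (S 0 0 * S 1 2 - S 0 2 * S 1 0) * hd -
      (S 0 0 * S 1 2 - S 0 2 * S 1 0) *
        (s 1 0 * (S 2 0 * R₈ 0 2 + S 2 2 * R₈ 2 2) -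
         s 2 0 * (S 1 0 * R₈ 0 2 + S 1 2 * R₈ 2 2)) * ha +
      (s 0 0 * s 1 1 - s 0 1 * s 1 0) * (S 1 0 * S 2 2 - S 1 2 * S 2 0) * h1
  have e22 : S 2 0 * R₈ 0 2 + S 2 2 * R₈ 2 2 =
      (S 0 0 * S 2 2 - S 0 2 * S 2 0) /
        ((s 0 0 * s 1 1 - s 0 1 * s 1 0) * (S 0 0 * S 2 2 - S 0 2 * S 2 0) -
          (s 0 0 * s 2 1 - s 0 1 * s 2 0) * (S 0 0 * S 1 2 - S 0 2 * S 1 0)) := by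
    rw [eq_div_iff hW2]
    linear_combination (S 0 0 * S 2 2 - S 0 2 * S 2 0) * hd -
      (S 0 0 * S 2 2 - S 0 2 * S 2 0) *
        (s 1 0 * (S 2 0 * R₈ 0 2 + S 2 2 * R₈ 2 2) -
         s 2 0 * (S 1 0 * R₈ 0 2 + S 1 2 * R₈ 2 2)) * ha +
      (s 0 0 * s 2 1 - s 0 1 * s 2 0) * (S 1 0 * S 2 2 - S 1 2 * S 2 0) * h1
  rw [Matrix.eta_fin_three S₈, hS00, h01, h02, hS10, hS11, hS20, hS21, hS12, hS22,
    e11, e21, e12, e22]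
end

section
/- Let u, q : ℝ × ℝ → ℝ be continuously differentiable functions of (x,t) satisfying the conservation law q_t + (q u)_x = 0 at every point, and let η : ℝ × ℝ → ℝ be a function of (x,t) that is continuously differentiable with continuous mixed second partial derivative ∂²η/∂x∂t, satisfying the characteristic equation ∂η/∂t (x,t) = u(η(x,t), t) for all (x,t). Then for each fixed x, the function t ↦ q(η(x,t), t) · ∂η/∂x (x,t) is constant in t; i.e. its derivative with respect to t vanishes identically. -/
open MeasureTheory Set intervalIntegral

/-- Evaluation of a continuous linear map on `ℝ × ℝ` in terms of the standard basis. -/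
private lemma clm_decomp (L : ℝ × ℝ →L[ℝ] ℝ) (a b : ℝ) :
    L (a, b) = a * L (1, 0) + b * L (0, 1) := by
  have h : ((a, b) : ℝ × ℝ) = a • ((1 : ℝ), (0 : ℝ)) + b • ((0 : ℝ), (1 : ℝ)) := by
    simp [Prod.ext_iff]
  rw [h, map_add, L.map_smul, L.map_smul, smul_eq_mul, smul_eq_mul]

/-- Fubini's theorem for interval integrals of continuous functions. -/
private lemma fubini_cont {f : ℝ → ℝ → ℝ}
    (hf : Continuous fun p : ℝ × ℝ => f p.1 p.2) (a b c d : ℝ) :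
    ∫ x in a..b, ∫ y in c..d, f x y = ∫ y in c..d, ∫ x in a..b, f x y := by
  have core : ∀ a b c d : ℝ, a ≤ b → c ≤ d →
      ∫ x in a..b, ∫ y in c..d, f x y = ∫ y in c..d, ∫ x in a..b, f x y := by
    intro a b c d hab hcd
    simp only [intervalIntegral.integral_of_le hab, intervalIntegral.integral_of_le hcd]
    have hint : IntegrableOn (Function.uncurry f) (Icc a b ×ˢ Icc c d) volume :=
      hf.continuousOn.integrableOn_compact (isCompact_Icc.prod isCompact_Icc)
    apply MeasureTheory.integral_integral_swap
    rw [Measure.prod_restrict, ← Measure.volume_eq_prod]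
    exact hint.mono_set (Set.prod_mono Ioc_subset_Icc_self Ioc_subset_Icc_self)
  rcases le_total a b with hab | hab <;> rcases le_total c d with hcd | hcd
  · exact core a b c d hab hcd
  · simp only [intervalIntegral.integral_symm d c, intervalIntegral.integral_neg, neg_inj]
    exact core a b d c hab hcd
  · simp only [intervalIntegral.integral_symm b a, intervalIntegral.integral_neg, neg_inj]
    exact core b a c d hab hcd
  · simp only [intervalIntegral.integral_symm b a, intervalIntegral.integral_symm d c,
      intervalIntegral.integral_neg, neg_neg, neg_inj]
    exact core b a d c hab hcd

/-- If `q, u` are C¹ and satisfy the conservation law `q_t + (qu)_x = 0`, and `η` is C¹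
with continuous mixed second partial `∂²η/∂x∂t` and satisfies the characteristic
equation `∂η/∂t(x,t) = u(η(x,t),t)`, then `t ↦ q(η(x,t),t) ∂η/∂x(x,t)` is constant:
its `t`-derivative vanishes identically. -/
theorem conservation_along_characteristics (u q η ηxt : ℝ → ℝ → ℝ)
    (hu : ContDiff ℝ 1 (fun p : ℝ × ℝ => u p.1 p.2))
    (hq : ContDiff ℝ 1 (fun p : ℝ × ℝ => q p.1 p.2))
    (hη : ContDiff ℝ 1 (fun p : ℝ × ℝ => η p.1 p.2))
    (hηxt : ∀ x t : ℝ,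
      HasDerivAt (fun t' => deriv (fun x' => η x' t') x) (ηxt x t) t)
    (hηxt_cont : Continuous (fun p : ℝ × ℝ => ηxt p.1 p.2))
    (hcons : ∀ x t : ℝ,
      deriv (fun t' => q x t') t + deriv (fun x' => q x' t * u x' t) x = 0)
    (hchar : ∀ x t : ℝ, deriv (fun t' => η x t') t = u (η x t) t) :
    ∀ x t : ℝ,
      deriv (fun t' => q (η x t') t' * deriv (fun x' => η x' t') x) t = 0 := by
  -- partial derivative notations
  let ux : ℝ → ℝ → ℝ := fun a b => fderiv ℝ (fun p : ℝ × ℝ => u p.1 p.2) (a, b) (1, 0)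
  let qx : ℝ → ℝ → ℝ := fun a b => fderiv ℝ (fun p : ℝ × ℝ => q p.1 p.2) (a, b) (1, 0)
  let qt : ℝ → ℝ → ℝ := fun a b => fderiv ℝ (fun p : ℝ × ℝ => q p.1 p.2) (a, b) (0, 1)
  let ex : ℝ → ℝ → ℝ := fun a b => deriv (fun y => η y b) a
  -- partial derivatives as HasDerivAt, for a general C¹ function
  have key : ∀ F : ℝ → ℝ → ℝ, ContDiff ℝ 1 (fun p : ℝ × ℝ => F p.1 p.2) →
      (∀ a b : ℝ, HasDerivAt (fun y => F y b)
        (fderiv ℝ (fun p : ℝ × ℝ => F p.1 p.2) (a, b) (1, 0)) a) ∧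
      (∀ a b : ℝ, HasDerivAt (fun s => F a s)
        (fderiv ℝ (fun p : ℝ × ℝ => F p.1 p.2) (a, b) (0, 1)) b) := by
    intro F hF
    constructor
    · intro a b
      have hfd := (hF.differentiable one_ne_zero (a, b)).hasFDerivAt
      have hc : HasDerivAt (fun y : ℝ => (y, b)) ((1 : ℝ), (0 : ℝ)) a :=
        (hasDerivAt_id a).prodMk (hasDerivAt_const a b)
      exact hfd.comp_hasDerivAt a hc
    · intro a b
      have hfd := (hF.differentiable one_ne_zero (a, b)).hasFDerivAt
      have hc : HasDerivAt (fun s : ℝ => (a, s)) ((0 : ℝ), (1 : ℝ)) b :=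
        (hasDerivAt_const b a).prodMk (hasDerivAt_id b)
      exact hfd.comp_hasDerivAt b hc
  obtain ⟨hasU_x, -⟩ := key u hu
  obtain ⟨hasQ_x, hasQ_t⟩ := key q hq
  obtain ⟨hasE_x', hasE_t'⟩ := key η hη
  -- the x-derivative of η
  have hasE_x : ∀ a b : ℝ, HasDerivAt (fun y => η y b) (ex a b) a := by
    intro a b
    have h := (hasE_x' a b).deriv
    rw [show ex a b = deriv (fun y => η y b) a from rfl, h]
    exact hasE_x' a b
  have ex_eq : ∀ a b : ℝ, ex a b = fderiv ℝ (fun p : ℝ × ℝ => η p.1 p.2) (a, b) (1, 0) :=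
    fun a b => (hasE_x' a b).deriv
  have cont_ex : Continuous fun p : ℝ × ℝ => ex p.1 p.2 := by
    have h : Continuous fun p : ℝ × ℝ =>
        fderiv ℝ (fun p : ℝ × ℝ => η p.1 p.2) p ((1 : ℝ), (0 : ℝ)) :=
      (hη.continuous_fderiv one_ne_zero).clm_apply continuous_const
    exact h.congr fun p => (ex_eq p.1 p.2).symm
  -- characteristic equation as HasDerivAt
  have char' : ∀ a b : ℝ, HasDerivAt (fun s => η a s) (u (η a b) b) b := by
    intro a b
    have h := (hasE_t' a b).deriv
    rw [← hchar a b, h]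
    exact hasE_t' a b
  -- FTC in t for the x-derivative of η
  have step1 : ∀ a b : ℝ, (∫ s in (0:ℝ)..b, ηxt a s) = ex a b - ex a 0 := by
    intro a b
    exact intervalIntegral.integral_eq_sub_of_hasDerivAt (fun s _ => hηxt a s)
      ((hηxt_cont.comp (continuous_const.prodMk continuous_id)).intervalIntegrable 0 b)
  -- FTC in x for η
  have step2 : ∀ z b : ℝ, (∫ y in (0:ℝ)..z, ex y b) = η z b - η 0 b := by
    intro z b
    exact intervalIntegral.integral_eq_sub_of_hasDerivAt (fun y _ => hasE_x y b)
      ((cont_ex.comp (continuous_id.prodMk continuous_const)).intervalIntegrable 0 z)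
  -- Schwarz-type identity via Fubini
  have key4 : ∀ z b : ℝ, u (η z b) b - u (η 0 b) b = ∫ y in (0:ℝ)..z, ηxt y b := by
    intro z b
    set G : ℝ → ℝ := fun s => ∫ y in (0:ℝ)..z, ηxt y s with hG
    have contG : Continuous G := by
      exact intervalIntegral.continuous_parametric_intervalIntegral_of_continuous'
        (f := fun s y => ηxt y s) (μ := volume)
        (hηxt_cont.comp (continuous_snd.prodMk continuous_fst)) 0 z
    have hPhiEq : ∀ s : ℝ,
        η z s - η 0 s = (η z 0 - η 0 0) + ∫ τ in (0:ℝ)..s, G τ := by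
      intro s
      have int1 : IntervalIntegrable (fun y => ex y s) volume 0 z :=
        (cont_ex.comp (continuous_id.prodMk continuous_const)).intervalIntegrable 0 z
      have int2 : IntervalIntegrable (fun y => ex y 0) volume 0 z :=
        (cont_ex.comp (continuous_id.prodMk continuous_const)).intervalIntegrable 0 z
      have h1 : (∫ y in (0:ℝ)..z, (ex y s - ex y 0))
          = (η z s - η 0 s) - (η z 0 - η 0 0) := by
        rw [intervalIntegral.integral_sub int1 int2, step2 z s, step2 z 0]
      have h2 : (∫ y in (0:ℝ)..z, (ex y s - ex y 0))
          = ∫ y in (0:ℝ)..z, ∫ τ in (0:ℝ)..s, ηxt y τ :=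
        intervalIntegral.integral_congr fun y _ => (step1 y s).symm
      have h3 := fubini_cont hηxt_cont 0 z 0 s
      have h4 : (∫ τ in (0:ℝ)..s, G τ)
          = ∫ τ in (0:ℝ)..s, ∫ y in (0:ℝ)..z, ηxt y τ := rfl
      rw [h4, ← h3, ← h2, h1]; ring
    have hd1 : HasDerivAt (fun s => η z s - η 0 s)
        (u (η z b) b - u (η 0 b) b) b := (char' z b).sub (char' 0 b)
    have hd2 : HasDerivAt (fun s => (η z 0 - η 0 0) + ∫ τ in (0:ℝ)..s, G τ) (G b) b := by
      exact (intervalIntegral.integral_hasDerivAt_right (contG.intervalIntegrable 0 b)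
          (contG.stronglyMeasurableAtFilter _ _) contG.continuousAt).const_add (η z 0 - η 0 0)
    have hfe : (fun s => η z s - η 0 s)
        = fun s => (η z 0 - η 0 0) + ∫ τ in (0:ℝ)..s, G τ := funext hPhiEq
    rw [hfe] at hd1
    exact hd1.unique hd2
  -- Schwarz: the x-derivative of the characteristic velocity is ηxt
  have schwarz : ∀ a b : ℝ, HasDerivAt (fun y => u (η y b) b) (ηxt a b) a := by
    intro a b
    have contb : Continuous fun y => ηxt y b :=
      hηxt_cont.comp (continuous_id.prodMk continuous_const)
    have hd : HasDerivAt (fun y => u (η 0 b) b + ∫ s in (0:ℝ)..y, ηxt s b) (ηxt a b) a := by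
      exact (intervalIntegral.integral_hasDerivAt_right (contb.intervalIntegrable 0 a)
          (contb.stronglyMeasurableAtFilter _ _) contb.continuousAt).const_add (u (η 0 b) b)
    have hfe : (fun y => u (η y b) b)
        = fun y => u (η 0 b) b + ∫ s in (0:ℝ)..y, ηxt s b := by
      funext y
      have := key4 y b
      linarith
    rw [hfe]
    exact hd
  -- mixed partials identity
  have mixed : ∀ a b : ℝ, ηxt a b = ux (η a b) b * ex a b := by
    intro a b
    have chain : HasDerivAt (fun y => u (η y b) b) (ux (η a b) b * ex a b) a :=
      by have := (hasU_x (η a b) b).comp a (hasE_x a b); exact this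
    exact (schwarz a b).unique chain
  -- conservation law rewritten
  have consEq : ∀ a b : ℝ, qt a b = -(qx a b * u a b + q a b * ux a b) := by
    intro a b
    have h1 := (hasQ_t a b).deriv
    have h2 : deriv (fun y => q y b * u y b) a = qx a b * u a b + q a b * ux a b :=
      ((hasQ_x a b).mul (hasU_x a b)).deriv
    have h3 := hcons a b
    rw [h1, h2] at h3
    linarith
  -- final computation
  intro x t
  have c1 : HasDerivAt (fun t' => (η x t', t')) (u (η x t) t, (1 : ℝ)) t :=
    (char' x t).prodMk (hasDerivAt_id t)
  have c2 : HasDerivAt ((fun p : ℝ × ℝ => q p.1 p.2) ∘ (fun t' => (η x t', t')))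
      (fderiv ℝ (fun p : ℝ × ℝ => q p.1 p.2) (η x t, t) (u (η x t) t, 1)) t :=
    HasFDerivAt.comp_hasDerivAt t ((hq.differentiable one_ne_zero (η x t, t)).hasFDerivAt) c1
  have c2' : HasDerivAt (fun t' => q (η x t') t')
      (u (η x t) t * qx (η x t) t + 1 * qt (η x t) t) t := by
    rw [clm_decomp (fderiv ℝ (fun p : ℝ × ℝ => q p.1 p.2) (η x t, t)) (u (η x t) t) 1] at c2
    exact c2
  have c3 : HasDerivAt (fun t' => ex x t') (ηxt x t) t := hηxt x t
  have c4 := c2'.mul c3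
  have c5 : deriv (fun t' => q (η x t') t' * ex x t') t
      = (u (η x t) t * qx (η x t) t + 1 * qt (η x t) t) * ex x t
        + q (η x t) t * ηxt x t := c4.deriv
  show deriv (fun t' => q (η x t') t' * deriv (fun x' => η x' t') x) t = 0
  rw [show (fun t' => q (η x t') t' * deriv (fun x' => η x' t') x)
      = fun t' => q (η x t') t' * ex x t' from rfl, c5, consEq (η x t) t, mixed x t]
  ring
end
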